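/- Assume μ satisfies Assumption (D). Let m > 0 and let L be a compact subset of {z ∈ ℂ : U_μ(z) ≥ m}. Then there exists a constant θ > 0 such that for every z ∈ L and every n, the probability that log|p_n(z)| < (1/2) m n is at most e^{−θ n}. -/

import Mathlib

open MeasureTheory ProbabilityTheory Filter Metric

/-- Logarithmic potential of a measure on ℂ. -/
noncomputable def logPot (μ : Measure ℂ) (z : ℂ) : ℝ :=
  ∫ w, Real.log ‖z - w‖ ∂μ

/-- Topological support of a measure on ℂ. -/
def msupport (μ : Measure ℂ) : Set ℂ :=
  {x : ℂ | ∀ U ∈ nhds x, 0 < μ U}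

/-- Assumption (A): for every compact `K`, `sup_{z ∈ K} ∫ (log|z-w|)² dμ(w) < ∞`. -/
def AssumptionA (μ : Measure ℂ) : Prop :=
  ∀ K : Set ℂ, IsCompact K → ∃ C : ℝ, ∀ z ∈ K,
    ∫⁻ w, ENNReal.ofReal ((Real.log ‖z - w‖) ^ 2) ∂μ ≤ ENNReal.ofReal C

/-- Assumption (D): `μ(B(z,r)) ≤ C rᵉ` for all `z` and `r > 0`. -/
def AssumptionD (μ : Measure ℂ) : Prop :=
  ∃ C : ℝ, ∃ ε : ℝ, 0 < ε ∧ ∀ z : ℂ, ∀ r : ℝ, 0 < r →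
    μ (Metric.ball z r) ≤ ENNReal.ofReal (C * r ^ ε)

/-- The filled unit lemniscate of `p_n(z) = ∏_{k<n} (z - X k ω)`. -/
def lemniscate {Ω : Type*} (X : ℕ → Ω → ℂ) (n : ℕ) (ω : Ω) : Set ℂ :=
  {z : ℂ | ‖∏ k ∈ Finset.range n, (z - X k ω)‖ < 1}

/-- Inradius of a planar set: the sup of radii of open disks contained in it (0 if none). -/
noncomputable def inradius (U : Set ℂ) : ℝ :=
  sSup {r : ℝ | 0 < r ∧ ∃ c : ℂ, Metric.ball c r ⊆ U}

open Real
open scoped ENNReal Topology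

/-!
Chernoff's method. Put `Y = log |z - X|`, so that `E Y = U_μ(z) ≥ m`. A second-order Taylor
bound gives `E e^{-sY} ≤ 1 - s E Y + s² c(b) E e^{b|Y|} ≤ e^{-3sm/4}` for small `s > 0`,
provided the exponential moments `E e^{b|Y|}` are bounded uniformly in `z ∈ L`. That uniformity
holds for `b < ε`: near `z`, a dyadic decomposition and the growth condition (D) bound
`E |z - X|^{-b}`, and away from `z` the bounded support bounds `E |z - X|^b`. By independence,
`P(log |p_n(z)| < mn/2) ≤ e^{smn/2} (E e^{-sY})^n ≤ e^{-smn/4}`; here (D) also rules out atoms,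
so that almost surely `log |p_n(z)| = ∑ₖ log |z - X_k|`.
-/

lemma Real.exp_le_one_add_add_sq_mul_exp_abs (x : ℝ) : exp x ≤ 1 + x + x ^ 2 * exp |x| := by
  have h1 : exp x - 1 ≤ x * exp x := by
    have h := mul_le_mul_of_nonneg_right (add_one_le_exp (-x)) (exp_pos x).le
    rw [← exp_add, neg_add_cancel, exp_zero] at h
    linarith
  rcases le_or_gt 0 x with hx | hx
  · rw [abs_of_nonneg hx]
    nlinarith [mul_le_mul_of_nonneg_left h1 hx]
  · have h2 : 1 - x ≤ exp |x| := by rw [abs_of_neg hx]; linarith [add_one_le_exp (-x)]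
    nlinarith [add_one_le_exp x, exp_pos x]

lemma Real.sq_le_mul_exp_mul_abs {a : ℝ} (ha : 0 < a) (t : ℝ) :
    t ^ 2 ≤ (2 / a) ^ 2 * exp (a * |t|) := by
  have h : a * |t| / 2 ≤ exp (a * |t| / 2) := by linarith [add_one_le_exp (a * |t| / 2)]
  calc t ^ 2 = (2 / a) ^ 2 * (a * |t| / 2) ^ 2 := by rw [← sq_abs t]; field_simp
    _ ≤ (2 / a) ^ 2 * exp (a * |t| / 2) ^ 2 := by gcongr
    _ = (2 / a) ^ 2 * exp (a * |t|) := by rw [← exp_nat_mul]; push_cast; ring_nf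

lemma Real.exp_neg_mul_le_one_sub_mul_add {b s : ℝ} (hb : 0 < b) (hs : 0 ≤ s)
    (hsb : s ≤ b / 2) (y : ℝ) :
    exp (-s * y) ≤ 1 - s * y + s ^ 2 * ((4 / b) ^ 2 * exp (b * |y|)) := by
  have hsq := sq_le_mul_exp_mul_abs (half_pos hb) y
  calc exp (-s * y) ≤ 1 + -s * y + (-s * y) ^ 2 * exp |-s * y| :=
        exp_le_one_add_add_sq_mul_exp_abs _
    _ = 1 - s * y + s ^ 2 * (y ^ 2 * exp (s * |y|)) := by
        rw [abs_mul, abs_neg, abs_of_nonneg hs]; ring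
    _ ≤ 1 - s * y + s ^ 2 * ((2 / (b / 2)) ^ 2 * exp (b / 2 * |y|) * exp (b / 2 * |y|)) := by
        gcongr
    _ = 1 - s * y + s ^ 2 * ((4 / b) ^ 2 * exp (b * |y|)) := by
        rw [mul_assoc _ (exp _), ← exp_add]; ring_nf

lemma Real.exp_mul_abs_log_le {d : ℝ} (hd : 0 < d) (b : ℝ) :
    exp (b * |log d|) ≤ d ^ b + d ^ (-b) := by
  rcases le_total 0 (log d) with h | h
  · rw [abs_of_nonneg h, rpow_def_of_pos hd b, mul_comm]
    exact le_add_of_nonneg_right (rpow_nonneg hd.le _)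
  · rw [abs_of_nonpos h, rpow_def_of_pos hd (-b), mul_neg, mul_neg, mul_comm]
    exact le_add_of_nonneg_left (rpow_nonneg hd.le _)

lemma exists_pos_lt_and_mul_lt {a c : ℝ} (ha : 0 < a) (hc : 0 < c) (A : ℝ) :
    ∃ s > 0, s < a ∧ s * A < c := by
  have hsmall : ∀ᶠ s in 𝓝[>] (0 : ℝ), s < a ∧ s * A < c :=
    ((eventually_lt_nhds ha).and (((continuous_mul_const A).tendsto' 0 0 (zero_mul A)).eventually
      (eventually_lt_nhds hc))).filter_mono nhdsWithin_le_nhds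
  obtain ⟨s, hs, hs_pos : 0 < s⟩ := (hsmall.and self_mem_nhdsWithin).exists
  exact ⟨s, hs_pos, hs⟩

section ExponentialMoment

variable {Ω : Type*} [MeasurableSpace Ω] {μ : Measure Ω} {Y : Ω → ℝ} {b : ℝ}

lemma integrable_of_integrable_exp_mul_abs [IsFiniteMeasure μ] (hY : AEStronglyMeasurable Y μ)
    (hb : 0 < b) (hint : Integrable (fun ω => exp (b * |Y ω|)) μ) : Integrable Y μ := by
  refine (hint.div_const b).mono' hY (ae_of_all _ fun ω => ?_)
  rw [norm_eq_abs, le_div_iff₀ hb]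
  linarith [add_one_le_exp (b * |Y ω|)]

lemma integrable_exp_mul_of_integrable_exp_mul_abs (hY : AEMeasurable Y μ) {s : ℝ}
    (hsb : |s| ≤ b) (hint : Integrable (fun ω => exp (b * |Y ω|)) μ) :
    Integrable (fun ω => exp (s * Y ω)) μ := by
  refine hint.mono' (hY.const_mul s).exp.aestronglyMeasurable (ae_of_all _ fun ω => ?_)
  rw [norm_of_nonneg (exp_nonneg _)]
  refine exp_le_exp.mpr ?_
  calc s * Y ω ≤ |s| * |Y ω| := by rw [← abs_mul]; exact le_abs_self _
    _ ≤ b * |Y ω| := by gcongr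

lemma mgf_neg_le_exp [IsProbabilityMeasure μ] (hY : AEMeasurable Y μ) (hb : 0 < b) {s : ℝ}
    (hs : 0 ≤ s) (hsb : s ≤ b / 2) (hint : Integrable (fun ω => exp (b * |Y ω|)) μ) :
    mgf Y μ (-s) ≤
      exp (-s * (∫ ω, Y ω ∂μ - s * ((4 / b) ^ 2 * ∫ ω, exp (b * |Y ω|) ∂μ))) := by
  have hYint : Integrable Y μ :=
    integrable_of_integrable_exp_mul_abs hY.aestronglyMeasurable hb hint
  have hmgf_int : Integrable (fun ω => exp (-s * Y ω)) μ :=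
    integrable_exp_mul_of_integrable_exp_mul_abs hY (by rw [abs_neg, abs_of_nonneg hs]; linarith)
      hint
  have hlin : Integrable (fun ω => 1 - s * Y ω) μ := (integrable_const 1).sub (hYint.const_mul s)
  have hrem : Integrable (fun ω => s ^ 2 * ((4 / b) ^ 2 * exp (b * |Y ω|))) μ :=
    (hint.const_mul _).const_mul _
  calc mgf Y μ (-s)
      ≤ ∫ ω, 1 - s * Y ω + s ^ 2 * ((4 / b) ^ 2 * exp (b * |Y ω|)) ∂μ :=
        integral_mono hmgf_int (hlin.add hrem) fun ω =>
          exp_neg_mul_le_one_sub_mul_add hb hs hsb (Y ω)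
    _ = 1 + -s * (∫ ω, Y ω ∂μ - s * ((4 / b) ^ 2 * ∫ ω, exp (b * |Y ω|) ∂μ)) := by
        rw [integral_add hlin hrem, integral_sub (integrable_const 1) (hYint.const_mul s),
          integral_const_mul, integral_const_mul, integral_const_mul]
        simp only [integral_const, probReal_univ, smul_eq_mul, mul_one]
        ring
    _ ≤ _ := by rw [add_comm]; exact add_one_le_exp _

end ExponentialMoment

lemma measureReal_sum_comp_le_le_exp_mul_mgf_pow {Ω E : Type*} [MeasurableSpace Ω]
    [MeasurableSpace E]
    {P : Measure Ω} [IsProbabilityMeasure P] {μ : Measure E} {X : ℕ → Ω → E}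
    (hmeas : ∀ k, Measurable (X k)) (hid : ∀ k, P.map (X k) = μ) (hindep : iIndepFun X P)
    {f : E → ℝ} (hf : Measurable f) {s : ℝ} (hs : 0 ≤ s)
    (hint : Integrable (fun w => exp (-s * f w)) μ) (n : ℕ) (c : ℝ) :
    P.real {ω | ∑ k ∈ Finset.range n, f (X k ω) ≤ c} ≤
      exp (s * c) * mgf f μ (-s) ^ n := by
  have hident : ∀ k, IdentDistrib (f ∘ X k) f P μ := fun k =>
    (⟨(hmeas k).aemeasurable, aemeasurable_id, by rw [hid k, Measure.map_id]⟩ :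
      IdentDistrib (X k) id P μ).comp hf
  have hindepf : iIndepFun (fun k => f ∘ X k) P := hindep.comp (fun _ => f) fun _ => hf
  have hsum_int : Integrable (fun ω => exp (-s * (∑ k ∈ Finset.range n, f ∘ X k) ω)) P :=
    hindepf.integrable_exp_mul_sum (fun k => hf.comp (hmeas k)) fun k _ =>
      ((hident k).comp (measurable_const_mul (-s)).exp).integrable_iff.mpr hint
  calc P.real {ω | ∑ k ∈ Finset.range n, f (X k ω) ≤ c}
      = P.real {ω | (∑ k ∈ Finset.range n, f ∘ X k) ω ≤ c} := by
        simp only [Finset.sum_apply, Function.comp_apply]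
    _ ≤ exp (-(-s) * c) * mgf (∑ k ∈ Finset.range n, f ∘ X k) P (-s) :=
        measure_le_le_exp_mul_mgf c (neg_nonpos.mpr hs) hsum_int
    _ = exp (s * c) * mgf f μ (-s) ^ n := by
        rw [hindepf.mgf_sum (fun k => hf.comp (hmeas k)), neg_neg,
          Finset.prod_congr rfl fun k _ => congrFun (mgf_congr_identDistrib (hident k)) (-s),
          Finset.prod_const, Finset.card_range]

section BallGrowth

variable {α : Type*} [PseudoMetricSpace α]

lemma ofReal_dist_rpow_neg_le_one_add_tsum_indicator (z w : α) {q : ℝ} (hq : 0 < q) :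
    ENNReal.ofReal (dist w z ^ (-q)) ≤
      1 + ∑' j : ℕ, (ball z (2 * (2⁻¹ : ℝ) ^ j)).indicator
        (fun _ => ENNReal.ofReal (((2⁻¹ : ℝ) ^ j / 2) ^ (-q))) w := by
  rcases (dist_nonneg : 0 ≤ dist w z).eq_or_lt with h0 | hpos
  · -- `0 ^ (-q) = 0` in Lean
    simp [← h0, zero_rpow (neg_ne_zero.mpr hq.ne')]
  rcases le_or_gt 1 (dist w z) with h1 | h1
  · exact le_add_right (ENNReal.ofReal_le_one.mpr
      (rpow_le_one_of_one_le_of_nonpos h1 (neg_nonpos.mpr hq.le)))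
  obtain ⟨j, hlow, hup⟩ :=
    exists_nat_pow_near_of_lt_one hpos h1.le (by norm_num : (0 : ℝ) < 2⁻¹) (by norm_num)
  refine le_add_left (le_trans ?_ (ENNReal.le_tsum j))
  have hmem : w ∈ ball z (2 * (2⁻¹ : ℝ) ^ j) := by
    rw [mem_ball]; linarith [pow_pos (by norm_num : (0 : ℝ) < 2⁻¹) j]
  rw [Set.indicator_of_mem hmem]
  refine ENNReal.ofReal_le_ofReal (rpow_le_rpow_of_nonpos (by positivity) ?_ (by linarith))
  rw [pow_succ] at hlow; linarith

variable [MeasurableSpace α] {μ : Measure α} {C ε : ℝ}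

lemma nullSingletonClass_of_measure_ball_le (hε : 0 < ε)
    (hD : ∀ z r, 0 < r → μ (ball z r) ≤ ENNReal.ofReal (C * r ^ ε)) :
    NullSingletonClass μ := by
  refine ⟨fun z => le_antisymm ?_ bot_le⟩
  have hlim : Tendsto (fun r : ℝ => ENNReal.ofReal (C * r ^ ε)) (𝓝[>] 0) (𝓝 0) := by
    have h : Tendsto (fun r : ℝ => C * r ^ ε) (𝓝[>] 0) (𝓝 (C * 0 ^ ε)) :=
      ((continuous_const.mul (continuous_rpow_const hε.le)).tendsto 0).mono_left
        nhdsWithin_le_nhds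
    simpa [zero_rpow hε.ne'] using ENNReal.tendsto_ofReal h
  exact ge_of_tendsto hlim (eventually_nhdsWithin_of_forall fun r (hr : 0 < r) =>
    (measure_mono (Set.singleton_subset_iff.mpr (mem_ball_self hr))).trans (hD z r hr))

/-- The shell `2⁻¹ ^ (j + 1) < dist w z ≤ 2⁻¹ ^ j` contributes at most
`2 ^ ((j + 1) q) · C 2 ^ ε 2 ^ (-j ε)`: a geometric series in `j`, so the bound is finite
exactly when `q < ε`. -/
lemma lintegral_dist_rpow_neg_le [OpensMeasurableSpace α] (z : α)
    (hD : ∀ r, 0 < r → μ (ball z r) ≤ ENNReal.ofReal (C * r ^ ε)) {q : ℝ} (hq : 0 < q) :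
    ∫⁻ w, ENNReal.ofReal (dist w z ^ (-q)) ∂μ ≤
      μ Set.univ +
        ENNReal.ofReal (C * 2 ^ (q + ε)) * (1 - ENNReal.ofReal (2 ^ (q - ε)))⁻¹ := by
  set r : ℕ → ℝ := fun j => (2⁻¹ : ℝ) ^ j
  have hterm : ∀ j, (r j / 2) ^ (-q) * (C * (2 * r j) ^ ε) =
      C * 2 ^ (q + ε) * ((2 : ℝ) ^ (q - ε)) ^ j := fun j => by
    have hr : 0 < r j := by positivity
    have hρ : ((2 : ℝ) ^ (q - ε)) ^ j = r j ^ (ε - q) := by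
      rw [← rpow_pow_comm (by norm_num), inv_rpow zero_le_two, ← rpow_neg zero_le_two, neg_sub]
    rw [hρ, div_rpow hr.le zero_le_two, mul_rpow zero_le_two hr.le, rpow_neg zero_le_two,
      rpow_add zero_lt_two, rpow_sub hr, rpow_neg hr.le]
    field_simp
  calc ∫⁻ w, ENNReal.ofReal (dist w z ^ (-q)) ∂μ
      ≤ ∫⁻ w, (1 + ∑' j, (ball z (2 * r j)).indicator
          (fun _ => ENNReal.ofReal ((r j / 2) ^ (-q))) w) ∂μ :=
        lintegral_mono fun w => ofReal_dist_rpow_neg_le_one_add_tsum_indicator z w hq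
    _ = μ Set.univ + ∑' j, ENNReal.ofReal ((r j / 2) ^ (-q)) * μ (ball z (2 * r j)) := by
        rw [lintegral_add_left measurable_const, lintegral_const, one_mul,
          lintegral_tsum fun j => (measurable_const.indicator measurableSet_ball).aemeasurable]
        simp_rw [lintegral_indicator_const measurableSet_ball]
    _ ≤ μ Set.univ +
          ∑' j : ℕ, ENNReal.ofReal (C * 2 ^ (q + ε)) * ENNReal.ofReal (2 ^ (q - ε)) ^ j := by
        refine add_le_add_right (ENNReal.tsum_le_tsum fun j => ?_) _
        calc ENNReal.ofReal ((r j / 2) ^ (-q)) * μ (ball z (2 * r j))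
            ≤ ENNReal.ofReal ((r j / 2) ^ (-q)) * ENNReal.ofReal (C * (2 * r j) ^ ε) := by
              gcongr; exact hD _ (by positivity)
          _ = _ := by
              rw [← ENNReal.ofReal_mul (by positivity), hterm,
                ENNReal.ofReal_mul' (by positivity), ENNReal.ofReal_pow (by positivity)]
    _ = _ := by rw [ENNReal.tsum_mul_left, ENNReal.tsum_geometric]

end BallGrowth

lemma msupport_eq_support (μ : Measure ℂ) : msupport μ = μ.support :=
  Set.ext fun x => (Measure.mem_support_iff_forall x).symm

lemma AssumptionD.nullSingletonClass {μ : Measure ℂ} (hD : AssumptionD μ) :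
    NullSingletonClass μ :=
  let ⟨_, _, hε, hball⟩ := hD
  nullSingletonClass_of_measure_ball_le hε hball

lemma lintegral_exp_mul_abs_log_norm_sub_le {μ : Measure ℂ} [IsProbabilityMeasure μ]
    [NullSingletonClass μ] {C ε b R : ℝ} {z : ℂ}
    (hball : ∀ r, 0 < r → μ (ball z r) ≤ ENNReal.ofReal (C * r ^ ε)) (hb : 0 < b)
    (hR : ∀ᵐ w ∂μ, ‖z - w‖ ≤ R) :
    ∫⁻ w, ENNReal.ofReal (exp (b * |log ‖z - w‖|)) ∂μ ≤ ENNReal.ofReal (R ^ b) +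
      (1 + ENNReal.ofReal (C * 2 ^ (b + ε)) * (1 - ENNReal.ofReal (2 ^ (b - ε)))⁻¹) := by
  have hpt : ∀ᵐ w ∂μ, ENNReal.ofReal (exp (b * |log ‖z - w‖|)) ≤
      ENNReal.ofReal (R ^ b) + ENNReal.ofReal (dist w z ^ (-b)) := by
    filter_upwards [μ.ae_ne z, hR] with w hwz hwR
    have hd : 0 < ‖z - w‖ := norm_pos_iff.mpr (sub_ne_zero.mpr hwz.symm)
    rw [dist_comm, dist_eq_norm]
    refine (ENNReal.ofReal_le_ofReal ((exp_mul_abs_log_le hd b).trans ?_)).trans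
      ENNReal.ofReal_add_le
    gcongr
  calc ∫⁻ w, ENNReal.ofReal (exp (b * |log ‖z - w‖|)) ∂μ
      ≤ ∫⁻ w, ENNReal.ofReal (R ^ b) + ENNReal.ofReal (dist w z ^ (-b)) ∂μ :=
        lintegral_mono_ae hpt
    _ ≤ _ := by
        rw [lintegral_add_left measurable_const, lintegral_const, measure_univ, mul_one]
        exact add_le_add_right (by simpa using lintegral_dist_rpow_neg_le z hball hb) _

lemma exists_integral_exp_mul_abs_log_le {μ : Measure ℂ} [IsProbabilityMeasure μ]
    (hS : Bornology.IsBounded (msupport μ)) (hD : AssumptionD μ) {L : Set ℂ}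
    (hL : Bornology.IsBounded L) :
    ∃ b > 0, ∃ K : ℝ, ∀ z ∈ L, Integrable (fun w => exp (b * |log ‖z - w‖|)) μ ∧
      ∫ w, exp (b * |log ‖z - w‖|) ∂μ ≤ K := by
  have := hD.nullSingletonClass
  obtain ⟨C, ε, hε, hball⟩ := hD
  obtain ⟨R, hR⟩ := isBounded_iff.mp (hL.union hS)
  have hb : 0 < ε / 2 := by positivity
  set B : ℝ≥0∞ := ENNReal.ofReal (R ^ (ε / 2)) +
    (1 + ENNReal.ofReal (C * 2 ^ (ε / 2 + ε)) * (1 - ENNReal.ofReal (2 ^ (ε / 2 - ε)))⁻¹)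
  have hB : B ≠ ∞ := by
    have hρ : ENNReal.ofReal (2 ^ (ε / 2 - ε)) < 1 := ENNReal.ofReal_lt_one.mpr
      (rpow_lt_one_of_one_lt_of_neg one_lt_two (by linarith))
    simp [B, ENNReal.mul_eq_top, (tsub_pos_iff_lt.mpr hρ).ne']
  refine ⟨ε / 2, hb, B.toReal, fun z hz => ?_⟩
  have hlint : ∫⁻ w, ENNReal.ofReal (exp (ε / 2 * |log ‖z - w‖|)) ∂μ ≤ B := by
    refine lintegral_exp_mul_abs_log_norm_sub_le (hball z) hb ?_
    filter_upwards [msupport_eq_support μ ▸ μ.support_mem_ae] with w hw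
    rw [← dist_eq_norm]
    exact hR (Or.inl hz) (Or.inr hw)
  have hmeas : Measurable fun w : ℂ => exp (ε / 2 * |log ‖z - w‖|) := by fun_prop
  have hnonneg : 0 ≤ᵐ[μ] fun w => exp (ε / 2 * |log ‖z - w‖|) :=
    ae_of_all _ fun _ => (exp_pos _).le
  refine ⟨⟨hmeas.aestronglyMeasurable, (hasFiniteIntegral_iff_ofReal hnonneg).mpr
    (hlint.trans_lt hB.lt_top)⟩, ?_⟩
  rw [integral_eq_lintegral_of_nonneg_ae hnonneg hmeas.aestronglyMeasurable]
  exact ENNReal.toReal_mono hB hlint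

section RandomPolynomial

variable {Ω : Type*} [MeasurableSpace Ω] {P : Measure Ω} {μ : Measure ℂ}
  {X : ℕ → Ω → ℂ}

lemma log_norm_prod_sub_ae_eq [NullSingletonClass μ] (hmeas : ∀ k, Measurable (X k))
    (hid : ∀ k, P.map (X k) = μ) (z : ℂ) (n : ℕ) :
    (fun ω => log ‖∏ k ∈ Finset.range n, (z - X k ω)‖) =ᵐ[P]
      fun ω => ∑ k ∈ Finset.range n, log ‖z - X k ω‖ := by
  have hne : ∀ᵐ ω ∂P, ∀ k, X k ω ≠ z :=
    ae_all_iff.mpr fun k => ae_of_ae_map (hmeas k).aemeasurable (hid k ▸ μ.ae_ne z)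
  filter_upwards [hne] with ω hω
  rw [norm_prod, log_prod fun k _ => norm_ne_zero_iff.mpr (sub_ne_zero.mpr (hω k).symm)]

lemma measure_log_norm_prod_sub_lt_le [IsProbabilityMeasure P] [NullSingletonClass μ]
    (hmeas : ∀ k, Measurable (X k)) (hid : ∀ k, P.map (X k) = μ) (hindep : iIndepFun X P)
    {z : ℂ} {s : ℝ} (hs : 0 ≤ s) (hint : Integrable (fun w => exp (-s * log ‖z - w‖)) μ)
    (n : ℕ) (c : ℝ) :
    P {ω | log ‖∏ k ∈ Finset.range n, (z - X k ω)‖ < c} ≤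
      ENNReal.ofReal (exp (s * c) * mgf (fun w => log ‖z - w‖) μ (-s) ^ n) :=
  calc P {ω | log ‖∏ k ∈ Finset.range n, (z - X k ω)‖ < c}
      = P {ω | ∑ k ∈ Finset.range n, log ‖z - X k ω‖ < c} :=
        measure_congr ((log_norm_prod_sub_ae_eq hmeas hid z n).mono fun _ hω =>
          congrArg (· < c) hω)
    _ ≤ ENNReal.ofReal (P.real {ω | ∑ k ∈ Finset.range n, log ‖z - X k ω‖ ≤ c}) := by
        rw [ofReal_measureReal]
        exact measure_mono (Set.ofPred_subset_ofPred.mpr fun _ hω => hω.le)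
    _ ≤ _ := ENNReal.ofReal_le_ofReal
        (measureReal_sum_comp_le_le_exp_mul_mgf_pow hmeas hid hindep (by fun_prop) hs hint n c)

end RandomPolynomial

theorem statement15
    {Ω : Type*} [MeasurableSpace Ω] (P : Measure Ω) [IsProbabilityMeasure P]
    (μ : Measure ℂ) [IsProbabilityMeasure μ] (hS : IsCompact (msupport μ))
    (hD : AssumptionD μ)
    (X : ℕ → Ω → ℂ) (hmeas : ∀ i, Measurable (X i))
    (hid : ∀ i, Measure.map (X i) P = μ)
    (hindep : iIndepFun X P)
    (m : ℝ) (hm : 0 < m)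
    (L : Set ℂ) (hL : IsCompact L) (hLsub : L ⊆ {z : ℂ | m ≤ logPot μ z}) :
    ∃ θ > (0 : ℝ), ∀ z ∈ L, ∀ n : ℕ,
      P {ω | Real.log ‖∏ k ∈ Finset.range n, (z - X k ω)‖ <
          1 / 2 * m * n} ≤
        ENNReal.ofReal (Real.exp (-θ * n)) := by
  have := hD.nullSingletonClass
  obtain ⟨b, hb, K, hK⟩ := exists_integral_exp_mul_abs_log_le hS.isBounded hD hL.isBounded
  obtain ⟨s, hs, hsb, hsK⟩ := exists_pos_lt_and_mul_lt (half_pos hb) (by positivity : 0 < m / 4)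
    ((4 / b) ^ 2 * K)
  refine ⟨s * m / 4, by positivity, fun z hz n => ?_⟩
  obtain ⟨hint, hKz⟩ := hK z hz
  have hmgf : mgf (fun w => log ‖z - w‖) μ (-s) ≤ exp (-s * (3 / 4 * m)) := by
    refine (mgf_neg_le_exp (by fun_prop) hb hs.le hsb.le hint).trans (exp_le_exp.mpr ?_)
    have hmean : m ≤ ∫ w, log ‖z - w‖ ∂μ := hLsub hz
    have hrem : s * ((4 / b) ^ 2 * ∫ w, exp (b * |log ‖z - w‖|) ∂μ) ≤ m / 4 :=
      le_trans (by gcongr) hsK.le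
    nlinarith
  refine (measure_log_norm_prod_sub_lt_le hmeas hid hindep hs.le
    (integrable_exp_mul_of_integrable_exp_mul_abs (by fun_prop)
      (by rw [abs_neg, abs_of_pos hs]; linarith) hint) n _).trans (ENNReal.ofReal_le_ofReal ?_)
  calc exp (s * (1 / 2 * m * n)) * mgf (fun w => log ‖z - w‖) μ (-s) ^ n
      ≤ exp (s * (1 / 2 * m * n)) * exp (-s * (3 / 4 * m)) ^ n := by gcongr; exact mgf_nonneg
    _ = exp (-(s * m / 4) * n) := by rw [← exp_nat_mul, ← exp_add]; ring_nf
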